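/- arXiv:1505.02579 — 4 statements merged into one kernel-verified Lean document; each statement's English description precedes it below -/
import Mathlib

section
/- Let bx be an initialisable transparent well-behaved bx over a lawful monad m with state S between A and B, with data readL, readR, setL, setR, initL, initR. Define sets : List A → List S → m (List S) by: sets [] cs = pure cs; sets (a :: as) [] = (a :: as).mapM initL; sets (a :: as) (c :: cs) = do let (_, c') ← setL a c; let cs' ← sets as cs; pure (c' :: cs'). Define the retentive list bx on state ℕ × List S between List A and List B by: lGetL := gets (fun (n, cs) => (cs.take n).map readL); lSetL as := fun (n, cs) => do let cs' ← sets as cs; pure (⟨⟩, (as.length, cs')); lInitL as := do let cs ← as.mapM initL; pure (as.length, cs); and dually lGetR, lSetR, lInitR defined in the same way from readR, setR, initR. Then: (i) (S_LG_L) (do lSetL as; lGetL) = (do lSetL as; pure as) for every as : List A; (ii) for every state (n, cs) with n ≤ cs.length, ((do let x ← lGetL; lSetL x) (n, cs) : m (PUnit × (ℕ × List S))) = pure (⟨⟩, (n, cs)); (iii) (I_LG_L) (do let σ ← lInitL as; pure ((σ.2.take σ.1).map readL, σ)) = (do let σ ← lInitL as; pure (as, σ)) for every as : List A; and the dual claims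 (S_RG_R), (G_RS_R) on states with n ≤ cs.length, and (I_RG_R) hold for the right-hand operations. -/
universe v

def getsS {m : Type → Type v} [Monad m] {σ α : Type} (f : σ → α) : StateT σ m α := do
  let s ← get
  pure (f s)

/-- Sequentially update a list of states from a list of views, initialising fresh states
for any extra views and retaining leftover states. -/
def setsList {m : Type → Type v} [Monad m] {S A : Type}
    (setL : A → StateT S m PUnit) (initL : A → m S) :
    List A → List S → m (List S)
  | [], cs => pure cs
  | a :: as, [] => (a :: as).mapM initL
  | a :: as, c :: cs => do
      let (_, c') ← (setL a).run c
      let cs' ← setsList setL initL as cs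
      pure (c' :: cs')

/-- `getL` of the retentive list bx. -/
def lGet {m : Type → Type v} [Monad m] {S A : Type} (readL : S → A) :
    StateT (ℕ × List S) m (List A) :=
  getsS (fun s => (s.2.take s.1).map readL)

/-- `setL` of the retentive list bx. -/
def lSet {m : Type → Type v} [Monad m] {S A : Type}
    (setL : A → StateT S m PUnit) (initL : A → m S) (as : List A) :
    StateT (ℕ × List S) m PUnit :=
  fun s => do
    let cs' ← setsList setL initL as s.2
    pure (PUnit.unit, (as.length, cs'))

/-- `initL` of the retentive list bx. -/
def lInit {m : Type → Type v} [Monad m] {S A : Type} (initL : A → m S) (as : List A) :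
    m (ℕ × List S) := do
  let cs ← as.mapM initL
  pure (as.length, cs)

/-! The list laws are the element laws applied position by position. `setsList as cs` overwrites
the first entries of `cs` with `setL` and initialises the missing ones with `initL`, so by (S_LG_L)
and (I_LG_L) its first `as.length` entries read back as `as`; writing back the views of the first
`n ≤ cs.length` entries changes nothing by (G_LS_L). The right-hand claims are the same lemmas for
`readR`, `setR`, `initR`. -/

section ListBx

variable {m : Type → Type v} [Monad m] {S A : Type}

theorem lSet_run {setL : A → StateT S m PUnit} {initL : A → m S} (as : List A)
    (s : ℕ × List S) :
    (lSet setL initL as).run s =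
      setsList setL initL as s.2 >>= fun cs => pure (PUnit.unit, (as.length, cs)) :=
  rfl

variable [LawfulMonad m]

theorem bind_comp_congr_of_bind_pure_eq {α β γ : Type} {t : m α} {u v : α → β}
    (h : (t >>= fun x => pure (u x)) = t >>= fun x => pure (v x)) (k : β → m γ) :
    (t >>= fun x => k (u x)) = t >>= fun x => k (v x) := by
  simpa only [bind_assoc, pure_bind] using congrArg (· >>= k) h

/-- The computation `t` only returns lists whose first `as.length` entries read as `as`. -/
def ReadsAs (readL : S → A) (as : List A) (t : m (List S)) : Prop :=
  (t >>= fun cs => pure ((cs.take as.length).map readL, cs)) = t >>= fun cs => pure (as, cs)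

theorem ReadsAs.bind_eq {readL : S → A} {as : List A} {t : m (List S)} {γ : Type}
    (h : ReadsAs readL as t) (k : List A → List S → m γ) :
    (t >>= fun cs => k ((cs.take as.length).map readL) cs) = t >>= fun cs => k as cs :=
  bind_comp_congr_of_bind_pure_eq h fun p => k p.1 p.2

theorem ReadsAs.cons {readL : S → A} {a : A} {as : List A} {α : Type} {t : m α} {g : α → S}
    (ht : (t >>= fun x => pure (readL (g x), g x)) = t >>= fun x => pure (a, g x))
    {u : m (List S)} (hu : ReadsAs readL as u) :
    ReadsAs readL (a :: as) (t >>= fun x => u >>= fun cs => pure (g x :: cs)) := by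
  simp only [ReadsAs, bind_assoc, pure_bind, List.length_cons, List.take_succ_cons,
    List.map_cons]
  calc (t >>= fun x => u >>= fun cs =>
          pure (readL (g x) :: (cs.take as.length).map readL, g x :: cs))
      = (t >>= fun x => u >>= fun cs => pure (readL (g x) :: as, g x :: cs)) :=
        bind_congr fun x => hu.bind_eq fun bs cs => pure (readL (g x) :: bs, g x :: cs)
    _ = (t >>= fun x => u >>= fun cs => pure (a :: as, g x :: cs)) :=
        bind_comp_congr_of_bind_pure_eq ht fun p => u >>= fun cs => pure (p.1 :: as, p.2 :: cs)

variable {readL : S → A} {setL : A → StateT S m PUnit} {initL : A → m S}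

theorem readsAs_mapM
    (ilgl : ∀ a : A, (do let s ← initL a; pure (readL s, s)) =
        ((do let s ← initL a; pure (a, s)) : m (A × S))) :
    ∀ as : List A, ReadsAs readL as (as.mapM initL)
  | [] => by simp [ReadsAs]
  | a :: as => by
      rw [List.mapM_cons]
      exact ReadsAs.cons (g := fun s => s) (ilgl a) (readsAs_mapM ilgl as)

theorem readsAs_setsList
    (slgl : ∀ a : A, (do setL a; getsS (m := m) readL) = (do setL a; pure a))
    (ilgl : ∀ a : A, (do let s ← initL a; pure (readL s, s)) =
        ((do let s ← initL a; pure (a, s)) : m (A × S))) :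
    ∀ (as : List A) (cs : List S), ReadsAs readL as (setsList setL initL as cs)
  | [], cs => by simp [ReadsAs, setsList]
  | a :: as, [] => readsAs_mapM ilgl (a :: as)
  | a :: as, c :: cs => by
      have hset : ((setL a).run c >>= fun p => pure (readL p.2, p.2)) =
          (setL a).run c >>= fun p => pure (a, p.2) := by
        simpa [getsS, StateT.run_bind] using congrArg (StateT.run · c) (slgl a)
      exact ReadsAs.cons hset (readsAs_setsList slgl ilgl as cs)

theorem setsList_take_map
    (glsl : (do let a ← getsS (m := m) readL; setL a) = (pure PUnit.unit : StateT S m PUnit)) :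
    ∀ (n : ℕ) (cs : List S), n ≤ cs.length →
      setsList setL initL ((cs.take n).map readL) cs = pure cs
  | 0, cs, _ => by simp [setsList]
  | n + 1, [], h => by simp at h
  | n + 1, c :: cs, h => by
      have hset : (setL (readL c)).run c = pure (PUnit.unit, c) := by
        simpa [getsS, StateT.run_bind] using congrArg (StateT.run · c) glsl
      simp only [List.take_succ_cons, List.map_cons, setsList, hset, pure_bind,
        setsList_take_map glsl n cs (Nat.le_of_succ_le_succ h)]

theorem lGet_run (s : ℕ × List S) :
    (lGet (m := m) readL).run s = pure ((s.2.take s.1).map readL, s) := by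
  simp [lGet, getsS]

theorem lSet_lGet
    (slgl : ∀ a : A, (do setL a; getsS (m := m) readL) = (do setL a; pure a))
    (ilgl : ∀ a : A, (do let s ← initL a; pure (readL s, s)) =
        ((do let s ← initL a; pure (a, s)) : m (A × S))) (as : List A) :
    (do lSet setL initL as; lGet (m := m) readL) = (do lSet setL initL as; pure as) := by
  ext ⟨n, cs⟩ : 1
  simp only [StateT.run_bind, lGet_run, lSet_run, bind_assoc, pure_bind]
  exact (readsAs_setsList slgl ilgl as cs).bind_eq fun bs cs' => pure (bs, (as.length, cs'))

theorem lGet_lSet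
    (glsl : (do let a ← getsS (m := m) readL; setL a) = (pure PUnit.unit : StateT S m PUnit))
    (n : ℕ) (cs : List S) (hn : n ≤ cs.length) :
    ((do let x ← lGet (m := m) readL; lSet setL initL x) : StateT (ℕ × List S) m PUnit).run
      (n, cs) = pure (PUnit.unit, (n, cs)) := by
  simp only [StateT.run_bind, lGet_run, lSet_run, pure_bind, setsList_take_map glsl n cs hn,
    List.length_map, List.length_take, Nat.min_eq_left hn]

theorem lInit_read
    (ilgl : ∀ a : A, (do let s ← initL a; pure (readL s, s)) =
        ((do let s ← initL a; pure (a, s)) : m (A × S))) (as : List A) :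
    (do let st ← lInit (m := m) initL as; pure ((st.2.take st.1).map readL, st)) =
      (do let st ← lInit (m := m) initL as; pure (as, st)) := by
  simp only [lInit, bind_assoc, pure_bind]
  exact (readsAs_mapM ilgl as).bind_eq fun bs cs => pure (bs, (as.length, cs))

end ListBx

theorem list_bx_wellBehaved
    {m : Type → Type v} [Monad m] [LawfulMonad m] {S A B : Type}
    (readL : S → A) (readR : S → B)
    (setL : A → StateT S m PUnit) (setR : B → StateT S m PUnit)
    (initL : A → m S) (initR : B → m S)
    (slgl : ∀ a : A, (do setL a; getsS (m := m) readL) = (do setL a; pure a))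
    (glsl : (do let a ← getsS (m := m) readL; setL a) = (pure PUnit.unit : StateT S m PUnit))
    (srgr : ∀ b : B, (do setR b; getsS (m := m) readR) = (do setR b; pure b))
    (grsr : (do let b ← getsS (m := m) readR; setR b) = (pure PUnit.unit : StateT S m PUnit))
    (ilgl : ∀ a : A, (do let s ← initL a; pure (readL s, s)) =
        ((do let s ← initL a; pure (a, s)) : m (A × S)))
    (irgr : ∀ b : B, (do let s ← initR b; pure (readR s, s)) =
        ((do let s ← initR b; pure (b, s)) : m (B × S))) :
    (∀ as : List A,
      (do lSet setL initL as; lGet (m := m) readL) = (do lSet setL initL as; pure as)) ∧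
    (∀ (n : ℕ) (cs : List S), n ≤ cs.length →
      ((do let x ← lGet (m := m) readL; lSet setL initL x) : StateT (ℕ × List S) m PUnit).run
          (n, cs) = pure (PUnit.unit, (n, cs))) ∧
    (∀ as : List A,
      (do let st ← lInit (m := m) initL as; pure ((st.2.take st.1).map readL, st)) =
      (do let st ← lInit (m := m) initL as; pure (as, st))) ∧
    (∀ bs : List B,
      (do lSet setR initR bs; lGet (m := m) readR) = (do lSet setR initR bs; pure bs)) ∧
    (∀ (n : ℕ) (cs : List S), n ≤ cs.length →
      ((do let y ← lGet (m := m) readR; lSet setR initR y) : StateT (ℕ × List S) m PUnit).run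
          (n, cs) = pure (PUnit.unit, (n, cs))) ∧
    (∀ bs : List B,
      (do let st ← lInit (m := m) initR bs; pure ((st.2.take st.1).map readR, st)) =
      (do let st ← lInit (m := m) initR bs; pure (bs, st))) :=
  ⟨lSet_lGet slgl ilgl, lGet_lSet glsl, lInit_read ilgl,
    lSet_lGet srgr irgr, lGet_lSet grsr, lInit_read irgr⟩
end

section
/- Let C, S, A, B be types and let m := ReaderT C Id be the reader monad. Suppose that for each c : C we are given a transparent well-behaved bx over m with state S between A and B, with data readL c : S → A, readR c : S → B, setL c : A → StateT S m PUnit, setR c : B → StateT S m PUnit, satisfying for each c the four laws (S_LG_L), (G_LS_L), (S_RG_R), (G_RS_R) of a transparent well-behaved bx. Define the switch bx by: getL := do let c ← monadLift (read : m C); gets (readL c); setL a := do let c ← monadLift read; setL c a; getR := do let c ← monadLift read; gets (readR c); setR b := do let c ← monadLift read; setR c b. Then the switch bx is well-behaved: it satisfies all seven laws (G_LG_L) (do let a ← getL; let a' ← getL; pure (a, a')) = (do let a ← getL; pure (a, a)); (S_LG_L) (do setL a; getL) = (do setL a; pure a) for all a; (G_LS_L) (do let a ← getL; setL a) = pure ⟨⟩;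 the dual laws (G_RG_R), (S_RG_R), (G_RS_R); and (G_LG_R) (do let a ← getL; let b ← getR; pure (a, b)) = (do let b ← getR; let a ← getL; pure (a, b)). -/
universe v

/-- The get operation of the switch bx: read the environment, then use the
corresponding pure query. -/
def switchGet {C S A : Type} (rd : C → S → A) : StateT S (ReaderT C Id) A := do
  let c ← monadLift (read : ReaderT C Id C)
  getsS (rd c)

/-- The set operation of the switch bx: read the environment, then use the
corresponding set operation. -/
def switchSet {C S A : Type} (st : C → A → StateT S (ReaderT C Id) PUnit) (a : A) :
    StateT S (ReaderT C Id) PUnit := do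
  let c ← monadLift (read : ReaderT C Id C)
  st c a

section Switch

variable {C S A : Type}

theorem switch_getGet (rd : C → S → A) :
    (do let a ← switchGet rd; let a' ← switchGet rd; pure (a, a')) =
      ((do let a ← switchGet rd; pure (a, a)) : StateT S (ReaderT C Id) (A × A)) :=
  rfl

theorem switch_getGet_comm {B : Type} (rdL : C → S → A) (rdR : C → S → B) :
    (do let a ← switchGet rdL; let b ← switchGet rdR; pure (a, b)) =
      ((do let b ← switchGet rdR; let a ← switchGet rdL; pure (a, b)) :
        StateT S (ReaderT C Id) (A × B)) :=
  rfl

/- The environment is read once and never changes, so run at state `s` and environment `c`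
both sides unfold definitionally to the two sides of the `c`-th law run at `s` and `c`. -/
theorem switch_setGet {rd : C → S → A} {st : C → A → StateT S (ReaderT C Id) PUnit}
    (h : ∀ c a, (do st c a; getsS (rd c)) = (do st c a; pure a)) (a : A) :
    (do switchSet st a; switchGet rd) = (do switchSet st a; pure a) :=
  funext fun s => funext fun c => congrFun (congrFun (h c a) s) c

theorem switch_getSet {rd : C → S → A} {st : C → A → StateT S (ReaderT C Id) PUnit}
    (h : ∀ c, (do let a ← getsS (rd c); st c a) =
      (pure PUnit.unit : StateT S (ReaderT C Id) PUnit)) :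
    (do let a ← switchGet rd; switchSet st a) =
      (pure PUnit.unit : StateT S (ReaderT C Id) PUnit) :=
  funext fun s => funext fun c => congrFun (congrFun (h c) s) c

end Switch

theorem switch_wellBehaved {C S A B : Type}
    (readL : C → S → A) (readR : C → S → B)
    (setL : C → A → StateT S (ReaderT C Id) PUnit)
    (setR : C → B → StateT S (ReaderT C Id) PUnit)
    (slgl : ∀ (c : C) (a : A),
      (do setL c a; getsS (readL c)) = (do setL c a; pure a))
    (glsl : ∀ c : C,
      (do let a ← getsS (readL c); setL c a) =
        (pure PUnit.unit : StateT S (ReaderT C Id) PUnit))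
    (srgr : ∀ (c : C) (b : B),
      (do setR c b; getsS (readR c)) = (do setR c b; pure b))
    (grsr : ∀ c : C,
      (do let b ← getsS (readR c); setR c b) =
        (pure PUnit.unit : StateT S (ReaderT C Id) PUnit)) :
    ((do let a ← switchGet readL; let a' ← switchGet readL; pure (a, a')) =
     ((do let a ← switchGet readL; pure (a, a)) : StateT S (ReaderT C Id) (A × A))) ∧
    (∀ a : A, (do switchSet setL a; switchGet readL) = (do switchSet setL a; pure a)) ∧
    ((do let a ← switchGet readL; switchSet setL a) =
      (pure PUnit.unit : StateT S (ReaderT C Id) PUnit)) ∧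
    ((do let b ← switchGet readR; let b' ← switchGet readR; pure (b, b')) =
     ((do let b ← switchGet readR; pure (b, b)) : StateT S (ReaderT C Id) (B × B))) ∧
    (∀ b : B, (do switchSet setR b; switchGet readR) = (do switchSet setR b; pure b)) ∧
    ((do let b ← switchGet readR; switchSet setR b) =
      (pure PUnit.unit : StateT S (ReaderT C Id) PUnit)) ∧
    ((do let a ← switchGet readL; let b ← switchGet readR; pure (a, b)) =
     ((do let b ← switchGet readR; let a ← switchGet readL; pure (a, b)) :
        StateT S (ReaderT C Id) (A × B))) :=
  ⟨switch_getGet readL, switch_setGet slgl, switch_getSet glsl,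
    switch_getGet readR, switch_setGet srgr, switch_getSet grsr,
    switch_getGet_comm readL readR⟩
end

section
/- Consider the List monad with its standard (lawful) monad structure. Let ok : A → B → Bool, bs : A → List B and as : B → List A satisfy: for all a and b, a ∈ as b → ok a b = true, and b ∈ bs a → ok a b = true. Define a bx over List with state A × B between A and B by getL := gets Prod.fst, getR := gets Prod.snd, setL a' := do let (a, b) ← get; if ok a' b then set (a', b) else do let b' ← monadLift (bs a'); set (a', b'), and setR b' := do let (a, b) ← get; if ok a b' then set (a, b') else do let a' ← monadLift (as b'); set (a', b'). Then: (i) (S_LG_L) (do setL a'; getL) = (do setL a'; pure a') and (S_RG_R) (do setR b'; getR) = (do setR b'; pure b') hold for all a' : A and b' : B; (ii) for every state (a, b) with ok a b = true, ((do let x ← getL; setL x) (a, b) : List (PUnit × (A × B))) = pure (⟨⟩, (a, b)) and ((do let y ← getR; setR y) (a, b) : List (PUnit × (A × B))) = pure (⟨⟩, (a, b)); and (iii) the set operations preserve consistency: for every a' : A and every state s : A × B, every element (u, (a'', b'')) of the list setL a' s satisfies ok a'' b'' = true, and likewise every element (u, (a'', b'')) of the list setR b' s satisfies ok a'' b'' =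 true for every b' : B. -/
universe v

/-- The left set operation of the nondeterministic bx over the List monad. -/
def ndSetL {A B : Type} (ok : A → B → Bool) (bs : A → List B) (a' : A) :
    StateT (A × B) List PUnit := do
  let (_a, b) ← get
  if ok a' b then set (a', b)
  else do
    let b' ← monadLift (bs a')
    set (a', b')

/-- The right set operation of the nondeterministic bx over the List monad. -/
def ndSetR {A B : Type} (ok : A → B → Bool) (as : B → List A) (b' : B) :
    StateT (A × B) List PUnit := do
  let (a, _b) ← get
  if ok a b' then set (a, b')
  else do
    let a' ← monadLift (as b')
    set (a', b')

/-! Both set operations, run from any state, only produce states whose updated component is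
the new value (giving the set-get laws), and each such state is consistent: either `ok` already
held for the kept component, or the other component was repaired from `bs` / `as`, whose entries
are consistent by hypothesis. From a consistent state the `ok` test succeeds, so get-set is a
single deterministic `set` back to the same state. -/

theorem getsS_run {σ α : Type} (f : σ → α) (s : σ) :
    (getsS (m := List) f).run s = [(f s, s)] := by
  simp [getsS]

theorem bind_getsS_eq_bind_pure {σ α : Type} (p : StateT σ List PUnit) (f : σ → α) (x : α)
    (h : ∀ s u s', (u, s') ∈ p.run s → f s' = x) :
    (do p; getsS f) = (do p; pure x) := by
  ext s : 1
  simp only [StateT.run_bind, getsS_run, StateT.run_pure]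
  exact List.flatMap_congr fun ⟨u, s'⟩ hmem => by rw [h s u s' hmem]; rfl

section
variable {A B : Type} (ok : A → B → Bool)

theorem ndSetL_run (bs : A → List B) (a' : A) (s : A × B) :
    (ndSetL ok bs a').run s =
      if ok a' s.2 then [(⟨⟩, (a', s.2))] else (bs a').map fun b' => (⟨⟩, (a', b')) := by
  split_ifs with h <;> simp [ndSetL, h, List.flatMap_assoc, List.map_eq_flatMap]

theorem ndSetR_run (as : B → List A) (b' : B) (s : A × B) :
    (ndSetR ok as b').run s =
      if ok s.1 b' then [(⟨⟩, (s.1, b'))] else (as b').map fun a' => (⟨⟩, (a', b')) := by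
  split_ifs with h <;> simp [ndSetR, h, List.flatMap_assoc, List.map_eq_flatMap]

theorem fst_eq_of_mem_ndSetL_run {bs : A → List B} {a' : A} {s : A × B} {u : PUnit}
    {s' : A × B} (hmem : (u, s') ∈ (ndSetL ok bs a').run s) : s'.1 = a' := by
  rw [ndSetL_run] at hmem
  split_ifs at hmem <;> grind

theorem snd_eq_of_mem_ndSetR_run {as : B → List A} {b' : B} {s : A × B} {u : PUnit}
    {s' : A × B} (hmem : (u, s') ∈ (ndSetR ok as b').run s) : s'.2 = b' := by
  rw [ndSetR_run] at hmem
  split_ifs at hmem <;> grind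

theorem ok_of_mem_ndSetL_run {bs : A → List B} (hbs : ∀ a b, b ∈ bs a → ok a b = true)
    {a' : A} {s s' : A × B} {u : PUnit} (hmem : (u, s') ∈ (ndSetL ok bs a').run s) :
    ok s'.1 s'.2 = true := by
  rw [ndSetL_run] at hmem
  split_ifs at hmem with h
  · simp_all
  · obtain ⟨b', hb', -, rfl⟩ := by simpa only [List.mem_map, Prod.mk.injEq] using hmem
    exact hbs a' b' hb'

theorem ok_of_mem_ndSetR_run {as : B → List A} (has : ∀ a b, a ∈ as b → ok a b = true)
    {b' : B} {s s' : A × B} {u : PUnit} (hmem : (u, s') ∈ (ndSetR ok as b').run s) :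
    ok s'.1 s'.2 = true := by
  rw [ndSetR_run] at hmem
  split_ifs at hmem with h
  · simp_all
  · obtain ⟨a', ha', -, rfl⟩ := by simpa only [List.mem_map, Prod.mk.injEq] using hmem
    exact has a' b' ha'

theorem getsS_fst_bind_ndSetL_run (bs : A → List B) {a : A} {b : B} (h : ok a b = true) :
    (do let x ← getsS Prod.fst; ndSetL ok bs x).run (a, b) = pure (⟨⟩, (a, b)) := by
  simp [getsS_run, ndSetL_run, h]

theorem getsS_snd_bind_ndSetR_run (as : B → List A) {a : A} {b : B} (h : ok a b = true) :
    (do let y ← getsS Prod.snd; ndSetR ok as y).run (a, b) = pure (⟨⟩, (a, b)) := by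
  simp [getsS_run, ndSetR_run, h]

end

theorem nondet_bx_wellBehaved {A B : Type}
    (ok : A → B → Bool) (bs : A → List B) (as : B → List A)
    (has : ∀ (a : A) (b : B), a ∈ as b → ok a b = true)
    (hbs : ∀ (a : A) (b : B), b ∈ bs a → ok a b = true) :
    (∀ a' : A,
      (do ndSetL ok bs a'; getsS (m := List) (Prod.fst : A × B → A)) =
      (do ndSetL ok bs a'; pure a')) ∧
    (∀ b' : B,
      (do ndSetR ok as b'; getsS (m := List) (Prod.snd : A × B → B)) =
      (do ndSetR ok as b'; pure b')) ∧
    (∀ (a : A) (b : B), ok a b = true →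
      (((do let x ← getsS (m := List) (Prod.fst : A × B → A)
            ndSetL ok bs x) : StateT (A × B) List PUnit).run (a, b) =
         pure (PUnit.unit, (a, b))) ∧
      (((do let y ← getsS (m := List) (Prod.snd : A × B → B)
            ndSetR ok as y) : StateT (A × B) List PUnit).run (a, b) =
         pure (PUnit.unit, (a, b)))) ∧
    (∀ (a' : A) (s : A × B) (u : PUnit) (a'' : A) (b'' : B),
      (u, (a'', b'')) ∈ (ndSetL ok bs a').run s → ok a'' b'' = true) ∧
    (∀ (b' : B) (s : A × B) (u : PUnit) (a'' : A) (b'' : B),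
      (u, (a'', b'')) ∈ (ndSetR ok as b').run s → ok a'' b'' = true) :=
  ⟨fun _ => bind_getsS_eq_bind_pure _ _ _ fun _ _ _ => fst_eq_of_mem_ndSetL_run ok,
    fun _ => bind_getsS_eq_bind_pure _ _ _ fun _ _ _ => snd_eq_of_mem_ndSetR_run ok,
    fun _ _ h => ⟨getsS_fst_bind_ndSetL_run ok bs h, getsS_snd_bind_ndSetR_run ok as h⟩,
    fun _ _ _ _ _ => ok_of_mem_ndSetL_run ok hbs,
    fun _ _ _ _ _ => ok_of_mem_ndSetR_run ok has⟩
end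

section
/- Let m be a lawful monad, let A and B have decidable equality, and let f : A → B → m B and g : A → B → m A. Define a bx over m with state Σ := (A × B) × List ((A × B) × B) × List ((A × B) × A) between A and B by: getL := gets (fun s => s.1.1); getR := gets (fun s => s.1.2); setL a' := do let ((a, b), fs, bs) ← get; if a = a' then pure ⟨⟩ else match fs.lookup (a', b) with | some b' => set ((a', b'), fs, bs) | none => do let b' ← monadLift (f a' b); set ((a', b'), ((a', b), b') :: fs, bs); and setR b' := do let ((a, b), fs, bs) ← get; if b = b' then pure ⟨⟩ else match bs.lookup (a, b') with | some a' => set ((a', b'), fs, bs) | none => do let a' ← monadLift (g a b'); set ((a', b'), fs, ((a, b'), a') :: bs). Then this 'dynamic' bx is transparent well-behaved: it satisfies (S_LG_L) (do setL a'; getL) = (do setL a'; pure a') for all a' : A; (G_LS_L) (do let a ← getL; setL a) = pure ⟨⟩; (S_RG_R) (do setR b'; getR) = (do setR b'; pure b') for all b' : B; and (G_RS_R) (do let b ← getR; setR b) = pure ⟨⟩. -/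
universe v

/-- The state space of the dynamic ("by example") bx. -/
abbrev DynState (A B : Type) : Type :=
  (A × B) × List ((A × B) × B) × List ((A × B) × A)

/-- The left set operation of the dynamic bx. -/
def dynSetL {m : Type → Type v} [Monad m] {A B : Type} [DecidableEq A] [DecidableEq B]
    (f : A → B → m B) (a' : A) : StateT (DynState A B) m PUnit := do
  let ((a, b), fs, bs) ← get
  if a = a' then pure PUnit.unit
  else
    match fs.lookup (a', b) with
    | some b' => set (((a', b'), fs, bs) : DynState A B)
    | none => do
        let b' ← monadLift (f a' b)
        set (((a', b'), ((a', b), b') :: fs, bs) : DynState A B)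

/-- The right set operation of the dynamic bx. -/
def dynSetR {m : Type → Type v} [Monad m] {A B : Type} [DecidableEq A] [DecidableEq B]
    (g : A → B → m A) (b' : B) : StateT (DynState A B) m PUnit := do
  let ((a, b), fs, bs) ← get
  if b = b' then pure PUnit.unit
  else
    match bs.lookup (a, b') with
    | some a' => set (((a', b'), fs, bs) : DynState A B)
    | none => do
        let a' ← monadLift (g a b')
        set (((a', b'), fs, ((a, b'), a') :: bs) : DynState A B)
/-!
Each set operation of the dynamic bx reads the state, runs an `m`-computation producing the new
opposite value and traces, and writes a state whose own component is the value just set (when the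
value is unchanged, writing the old state back is the same as doing nothing). Put in this form,
(S_LG_L) and (S_RG_R) are the set-get law of `StateT`. For (G_LS_L) and (G_RS_R), setting the
current value takes the `if` branch and returns the state untouched.
-/

section StateT

variable {m : Type → Type v} [Monad m] [LawfulMonad m] {σ α : Type}

theorem getsS_bind_run {β : Type} (p : σ → α) (k : α → StateT σ m β) (s : σ) :
    (getsS p >>= k).run s = (k (p s)).run s := by
  simp [getsS]

theorem set_bind_getsS (s' : σ) (p : σ → α) :
    (do set s'; getsS p : StateT σ m α) = (do set s'; pure (p s')) := by
  ext s
  simp [getsS]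

end StateT

section Dynamic

variable {m : Type → Type v} [Monad m] {A B : Type} [DecidableEq A] [DecidableEq B]

def dynStepL (f : A → B → m B) (a' : A) :
    DynState A B → m (B × List ((A × B) × B) × List ((A × B) × A))
  | ((a, b), fs, bs) =>
    if a = a' then pure (b, fs, bs)
    else
      match fs.lookup (a', b) with
      | some b' => pure (b', fs, bs)
      | none => (fun b' => (b', ((a', b), b') :: fs, bs)) <$> f a' b

def dynStepR (g : A → B → m A) (b' : B) :
    DynState A B → m (A × List ((A × B) × B) × List ((A × B) × A))
  | ((a, b), fs, bs) =>
    if b = b' then pure (a, fs, bs)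
    else
      match bs.lookup (a, b') with
      | some a' => pure (a', fs, bs)
      | none => (fun a' => (a', fs, ((a, b'), a') :: bs)) <$> g a b'

variable [LawfulMonad m]

theorem dynSetL_eq_bind_dynStepL (f : A → B → m B) (a' : A) :
    dynSetL f a' = (do
      let s ← get
      let r ← monadLift (dynStepL f a' s)
      set (((a', r.1), r.2) : DynState A B)) := by
  ext ⟨⟨a, b⟩, fs, bs⟩
  simp only [dynSetL, dynStepL, StateT.run_bind, StateT.run_get, pure_bind]
  split
  · subst_vars; simp
  · cases fs.lookup (a', b) <;> simp

theorem dynSetR_eq_bind_dynStepR (g : A → B → m A) (b' : B) :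
    dynSetR g b' = (do
      let s ← get
      let r ← monadLift (dynStepR g b' s)
      set (((r.1, b'), r.2) : DynState A B)) := by
  ext ⟨⟨a, b⟩, fs, bs⟩
  simp only [dynSetR, dynStepR, StateT.run_bind, StateT.run_get, pure_bind]
  split
  · subst_vars; simp
  · cases bs.lookup (a, b') <;> simp

theorem dynSetL_run_self (f : A → B → m B) (s : DynState A B) :
    (dynSetL f s.1.1).run s = pure (PUnit.unit, s) := by
  simp [dynSetL]

theorem dynSetR_run_self (g : A → B → m A) (s : DynState A B) :
    (dynSetR g s.1.2).run s = pure (PUnit.unit, s) := by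
  simp [dynSetR]

end Dynamic

theorem dynamic_bx_wellBehaved
    {m : Type → Type v} [Monad m] [LawfulMonad m] {A B : Type}
    [DecidableEq A] [DecidableEq B]
    (f : A → B → m B) (g : A → B → m A) :
    (∀ a' : A,
      (do dynSetL f a'; getsS (m := m) (fun s : DynState A B => s.1.1)) =
      (do dynSetL f a'; pure a')) ∧
    ((do let a ← getsS (m := m) (fun s : DynState A B => s.1.1); dynSetL f a) =
      (pure PUnit.unit : StateT (DynState A B) m PUnit)) ∧
    (∀ b' : B,
      (do dynSetR g b'; getsS (m := m) (fun s : DynState A B => s.1.2)) =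
      (do dynSetR g b'; pure b')) ∧
    ((do let b ← getsS (m := m) (fun s : DynState A B => s.1.2); dynSetR g b) =
      (pure PUnit.unit : StateT (DynState A B) m PUnit)) := by
  refine ⟨fun a' => ?_, StateT.ext fun s => ?_, fun b' => ?_, StateT.ext fun s => ?_⟩
  · simp only [dynSetL_eq_bind_dynStepL, bind_assoc, set_bind_getsS]
  · rw [getsS_bind_run, dynSetL_run_self]; rfl
  · simp only [dynSetR_eq_bind_dynStepR, bind_assoc, set_bind_getsS]
  · rw [getsS_bind_run, dynSetR_run_self]; rfl
end
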